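/- Let K be a field of characteristic zero, R = K[[t]], and G ⊆ R{x_1,...,x_n} a differential ideal. If φ ∈ R^n is a solution of G, then trop(φ) is a solution of trop(G) = {trop(P) : P ∈ G}; i.e., trop(Sol(G)) ⊆ Sol(trop(G)). -/

import Mathlib

/-- Formal derivative of a power series. -/
noncomputable def pd {K : Type*} [Semiring K] (φ : PowerSeries K) : PowerSeries K :=
  PowerSeries.mk fun k => ((k + 1 : ℕ) : K) * PowerSeries.coeff (k + 1) φ

/-- Support of a power series. -/
def suppS {K : Type*} [Semiring K] (φ : PowerSeries K) : Set ℕ :=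
  {k | PowerSeries.coeff k φ ≠ 0}

/-- t-adic valuation of a power series, with value `⊤` at `0`. -/
noncomputable def pval {K : Type*} [Semiring K] (φ : PowerSeries K) : ℕ∞ :=
  sInf ((fun k : ℕ => (k : ℕ∞)) '' suppS φ)

/-- `Val_S(j) = min{s ∈ S : s ≥ j} − j`, or `⊤` if `S ∩ Z_{≥j} = ∅`. -/
noncomputable def ValS (S : Set ℕ) (j : ℕ) : ℕ∞ :=
  sInf ((fun s : ℕ => ((s - j : ℕ) : ℕ∞)) '' {s ∈ S | j ≤ s})

/-- Tropical evaluation of the differential monomial with exponent matrix `m`: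
`ε_m(S) = Σ m_{ij} · Val_{S_i}(j)`. -/
noncomputable def eps {n : ℕ} (m : (Fin n × ℕ) →₀ ℕ) (S : Fin n → Set ℕ) : ℕ∞ :=
  m.sum fun v k => (k : ℕ∞) * ValS (S v.1) v.2

/-- Value at `S` of the tropicalization of a differential polynomial:
`min over monomials m of val(ψ_m) + ε_m(S)`. -/
noncomputable def tropVal {K : Type*} [CommSemiring K] {n : ℕ}
    (P : MvPolynomial (Fin n × ℕ) (PowerSeries K)) (S : Fin n → Set ℕ) : ℕ∞ :=
  sInf ((fun m => pval (MvPolynomial.coeff m P) + eps m S) '' (P.support : Set ((Fin n × ℕ) →₀ ℕ)))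

/-- `S` is a solution of `trop(P)`: the minimum is `⊤` or is attained at two distinct monomials. -/
noncomputable def isTropSol {K : Type*} [CommSemiring K] {n : ℕ}
    (P : MvPolynomial (Fin n × ℕ) (PowerSeries K)) (S : Fin n → Set ℕ) : Prop :=
  tropVal P S = ⊤ ∨
    ∃ m₁ ∈ P.support, ∃ m₂ ∈ P.support, m₁ ≠ m₂ ∧
      pval (MvPolynomial.coeff m₁ P) + eps m₁ S = tropVal P S ∧
      pval (MvPolynomial.coeff m₂ P) + eps m₂ S = tropVal P S

/-- The derivation on the ring of differential polynomials `R{x_1,…,x_n}`,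
extending the derivation `d` on `R`, with `d(x_{ij}) = x_{i(j+1)}`. -/
noncomputable def dPoly {R : Type*} [CommRing R] (d : R → R) {n : ℕ}
    (P : MvPolynomial (Fin n × ℕ) R) : MvPolynomial (Fin n × ℕ) R :=
  ((AddMonoidAlgebra.coeff P).sum fun m c => MvPolynomial.monomial m (d c)) +
    ∑ v ∈ P.vars, MvPolynomial.X (v.1, v.2 + 1) * MvPolynomial.pderiv v P

/-- Evaluation of a differential polynomial at a tuple of power series:
substitute `x_{ij} ↦ d^j φ_i`. -/
noncomputable def evalDP {K : Type*} [CommRing K] {n : ℕ} (φ : Fin n → PowerSeries K)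
    (P : MvPolynomial (Fin n × ℕ) (PowerSeries K)) : PowerSeries K :=
  MvPolynomial.eval (fun v => pd^[v.2] (φ v.1)) P

/-- The bijection `Ψ : K^{Z≥0} → K[[t]]`, `Ψ(a) = Σ a_j t^j / j!`. -/
noncomputable def Psi {K : Type*} [Field K] (a : ℕ → K) : PowerSeries K :=
  PowerSeries.mk fun j => a j / (j.factorial : K)

/-- The Zariski topology on affine `N`-space over `K`. -/
def zariskiT (N : ℕ) (K : Type*) [CommRing K] : TopologicalSpace (Fin N → K) :=
  TopologicalSpace.generateFrom
    {U | ∃ p : MvPolynomial (Fin N) K, U = {x | MvPolynomial.eval x p ≠ 0}}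

/-- A constructible set: a finite union of locally closed sets. -/
def IsConstructibleIn {X : Type*} (τ : TopologicalSpace X) (C : Set X) : Prop :=
  ∃ (r : ℕ) (U Z : Fin r → Set X),
    (∀ i, @IsOpen X τ (U i)) ∧ (∀ i, @IsClosed X τ (Z i)) ∧ C = ⋃ i, U i ∩ Z i

/-! The `j`-th derivative of `φ` has `t`-adic order `Val_{supp φ}(j)`, because in characteristic
zero differentiation shifts the support down by one without cancelling coefficients. Hence the
term of `P(φ)` coming from a monomial `ψ_m x^m` has order exactly `val(ψ_m) + ε_m(supp φ)`, and
since these finitely many terms sum to `0`, their minimal order, when finite, is attained twice. -/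

open PowerSeries

namespace PowerSeries

theorem exists_ne_order_eq_of_sum_eq_zero {R ι : Type*} [Semiring R] {s : Finset ι}
    {F : ι → R⟦X⟧} (hsum : ∑ i ∈ s, F i = 0) {i : ι} (hi : i ∈ s)
    (hmin : ∀ j ∈ s, (F i).order ≤ (F j).order) (hfin : (F i).order ≠ ⊤) :
    ∃ j ∈ s, j ≠ i ∧ (F j).order = (F i).order := by
  lift (F i).order to ℕ using hfin with d hd
  by_contra! hgt
  have hcoeff : ∀ j ∈ s, j ≠ i → coeff d (F j) = 0 := fun j hj hji =>
    coeff_of_lt_order d (lt_of_le_of_ne (hd ▸ hmin j hj) (hgt j hj hji).symm)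
  have hsum_d := congrArg (coeff d) hsum
  rw [map_sum, map_zero, Finset.sum_eq_single_of_mem i hi hcoeff] at hsum_d
  exact (order_eq_nat.mp hd.symm).1 hsum_d

end PowerSeries

theorem pval_eq_order {K : Type*} [Semiring K] (f : K⟦X⟧) : pval f = f.order := by
  refine le_antisymm ?_ (le_sInf ?_)
  · rcases eq_or_ne f 0 with rfl | hf
    · simp
    exact sInf_le ⟨f.order.toNat, coeff_order hf, ENat.natCast_toNat (order_eq_top.not.mpr hf)⟩
  · rintro _ ⟨k, hk, rfl⟩
    exact order_le k hk

theorem pd_eq_derivative {K : Type*} [CommSemiring K] : (pd : K⟦X⟧ → K⟦X⟧) = d⁄dX K := by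
  funext f
  ext k
  rw [pd, coeff_mk, coeff_derivative, mul_comm, Nat.cast_succ]

section CharZero

variable {K : Type*} [CommRing K] [IsDomain K] [CharZero K]

theorem suppS_iterate_pd (f : K⟦X⟧) (j : ℕ) : suppS (pd^[j] f) = (· + j) ⁻¹' suppS f := by
  ext k
  simp [suppS, pd_eq_derivative, coeff_iterate_derivative, (Nat.ascFactorial_pos _ _).ne']

theorem order_iterate_pd (f : K⟦X⟧) (j : ℕ) : (pd^[j] f).order = ValS (suppS f) j := by
  rw [← pval_eq_order, pval, suppS_iterate_pd, ValS]
  congr 1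
  ext x
  constructor
  · rintro ⟨k, hk, rfl⟩
    exact ⟨k + j, ⟨hk, Nat.le_add_left _ _⟩, by simp⟩
  · rintro ⟨s, ⟨hs, hjs⟩, rfl⟩
    exact ⟨s - j, by simpa [Nat.sub_add_cancel hjs], rfl⟩

variable {n : ℕ}

theorem order_evalDP_monomial (φ : Fin n → K⟦X⟧) (m : (Fin n × ℕ) →₀ ℕ) (c : K⟦X⟧) :
    (evalDP φ (MvPolynomial.monomial m c)).order = pval c + eps m (fun i => suppS (φ i)) := by
  rw [evalDP, MvPolynomial.eval_monomial, order_mul, pval_eq_order, Finsupp.prod, order_prod,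
    eps, Finsupp.sum]
  congr 1
  refine Finset.sum_congr rfl fun v _ => ?_
  rw [order_pow, order_iterate_pd, nsmul_eq_mul]

theorem isTropSol_of_evalDP_eq_zero (P : MvPolynomial (Fin n × ℕ) K⟦X⟧) (φ : Fin n → K⟦X⟧)
    (hP : evalDP φ P = 0) : isTropSol P (fun i => suppS (φ i)) := by
  set F : ((Fin n × ℕ) →₀ ℕ) → K⟦X⟧ :=
    fun m => evalDP φ (MvPolynomial.monomial m (MvPolynomial.coeff m P))
  have hsum : ∑ m ∈ P.support, F m = 0 := by
    simp only [F, evalDP]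
    rw [← map_sum, ← P.as_sum]
    exact hP
  have horder : ∀ m, (F m).order = pval (MvPolynomial.coeff m P) + eps m (fun i => suppS (φ i)) :=
    fun m => order_evalDP_monomial φ m _
  have htrop : tropVal P (fun i => suppS (φ i)) = P.support.inf fun m => (F m).order := by
    simp only [tropVal, horder, Finset.inf_eq_sInf_image]
  rcases P.support.eq_empty_or_nonempty with hempty | hne
  · left
    simp [htrop, hempty]
  obtain ⟨m₁, hm₁, hmin⟩ := P.support.exists_min_image (fun m => (F m).order) hne
  have hval : tropVal P (fun i => suppS (φ i)) = (F m₁).order :=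
    htrop ▸ le_antisymm (Finset.inf_le hm₁) (Finset.le_inf hmin)
  rcases eq_or_ne (F m₁).order ⊤ with htop | hfin
  · exact Or.inl (hval.trans htop)
  obtain ⟨m₂, hm₂, hne₂, heq⟩ := exists_ne_order_eq_of_sum_eq_zero hsum hm₁ hmin hfin
  exact Or.inr ⟨m₁, hm₁, m₂, hm₂, hne₂.symm, (horder m₁).symm.trans hval.symm,
    (horder m₂).symm.trans (heq.trans hval.symm)⟩

end CharZero

theorem stmt9_general {K : Type*} [Field K] [CharZero K] {n : ℕ}
    (G : Ideal (MvPolynomial (Fin n × ℕ) (PowerSeries K)))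
    (φ : Fin n → PowerSeries K)
    (hφ : ∀ P ∈ G, evalDP φ P = 0) :
    ∀ P ∈ G, isTropSol P (fun i => suppS (φ i)) :=
  fun P hP => isTropSol_of_evalDP_eq_zero P φ (hφ P hP)

/-- `trop(Sol(G)) ⊆ Sol(trop(G))` for a differential ideal `G`. -/
theorem stmt9 {K : Type*} [Field K] [CharZero K] {n : ℕ}
    (G : Ideal (MvPolynomial (Fin n × ℕ) (PowerSeries K)))
    (hdiff : ∀ P ∈ G, dPoly pd P ∈ G)
    (φ : Fin n → PowerSeries K)
    (hφ : ∀ P ∈ G, evalDP φ P = 0) :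
    ∀ P ∈ G, isTropSol P (fun i => suppS (φ i)) :=
  stmt9_general G φ hφ
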